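/- arXiv:1401.3169 — 8 statements merged into one kernel-verified Lean document; each statement's English description precedes it below -/
import Mathlib

section
/- In a normed space, if inf over μ ∈ ℂ of ‖x + μ • y‖ equals 0 and x ≠ 0, then there exists a unimodular λ such that ‖x + λ • y‖ = ‖x‖ + ‖y‖. That is, 0-approximate parallelism implies exact parallelism. -/
/-! A line through `x` in the direction of `y` is closed, being a translate of a finite-dimensional
subspace, so an infimum `0` of `‖x + μ • y‖` is attained and `x = c • y`. Then `λ = exp (i arg c)`
points the same way as `c`, so `‖c + λ‖ = ‖c‖ + 1`. -/

theorem Complex.exists_norm_eq_one_norm_add_eq (c : ℂ) :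
    ∃ lam : ℂ, ‖lam‖ = 1 ∧ ‖c + lam‖ = ‖c‖ + 1 := by
  refine ⟨Complex.exp (c.arg * Complex.I), Complex.norm_exp_ofReal_mul_I _, ?_⟩
  have hpolar : c + Complex.exp (c.arg * Complex.I)
      = ((‖c‖ + 1 : ℝ) : ℂ) * Complex.exp (c.arg * Complex.I) := by
    push_cast
    rw [add_one_mul, Complex.norm_mul_exp_arg_mul_I]
  rw [hpolar, norm_mul, Complex.norm_exp_ofReal_mul_I, mul_one, Complex.norm_real,
    Real.norm_of_nonneg (by positivity)]

theorem exists_smul_eq_of_iInf_norm_add_smul_eq_zero {𝕜 E : Type*} [NontriviallyNormedField 𝕜]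
    [CompleteSpace 𝕜] [NormedAddCommGroup E] [NormedSpace 𝕜 E] {x y : E}
    (h : (⨅ μ : 𝕜, ‖x + μ • y‖) = 0) : ∃ c : 𝕜, c • y = x := by
  have hclosure : -x ∈ closure (Submodule.span 𝕜 {y} : Set E) := by
    refine Metric.mem_closure_iff.mpr fun ε hε => ?_
    obtain ⟨μ, hμ⟩ := exists_lt_of_ciInf_lt (h.trans_lt hε)
    refine ⟨μ • y, Submodule.smul_mem _ μ (Submodule.mem_span_singleton_self y), ?_⟩
    rwa [dist_eq_norm, ← norm_neg, neg_sub, sub_neg_eq_add, add_comm]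
  rw [(Submodule.span 𝕜 {y}).closed_of_finiteDimensional.closure_eq, SetLike.mem_coe,
    Submodule.mem_span_singleton] at hclosure
  obtain ⟨a, ha⟩ := hclosure
  exact ⟨-a, by rw [neg_smul, ha, neg_neg]⟩

theorem exists_norm_eq_one_norm_smul_add_smul_eq {E : Type*} [NormedAddCommGroup E]
    [NormedSpace ℂ E] (c : ℂ) (y : E) :
    ∃ lam : ℂ, ‖lam‖ = 1 ∧ ‖c • y + lam • y‖ = ‖c • y‖ + ‖y‖ := by
  obtain ⟨lam, hlam, hadd⟩ := Complex.exists_norm_eq_one_norm_add_eq c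
  exact ⟨lam, hlam, by rw [← add_smul, norm_smul, norm_smul, hadd, add_one_mul]⟩

theorem stmt_4_general {V : Type*} [NormedAddCommGroup V] [NormedSpace ℂ V]
    (x y : V) (h : (⨅ μ : ℂ, ‖x + μ • y‖) = 0) :
    ∃ lam : ℂ, ‖lam‖ = 1 ∧ ‖x + lam • y‖ = ‖x‖ + ‖y‖ := by
  obtain ⟨c, rfl⟩ := exists_smul_eq_of_iInf_norm_add_smul_eq_zero h
  exact exists_norm_eq_one_norm_smul_add_smul_eq c y

theorem stmt_4 {V : Type*} [NormedAddCommGroup V] [NormedSpace ℂ V]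
    (x y : V) (hx : x ≠ 0) (h : (⨅ μ : ℂ, ‖x + μ • y‖) = 0) :
    ∃ lam : ℂ, ‖lam‖ = 1 ∧ ‖x + lam • y‖ = ‖x‖ + ‖y‖ :=
  stmt_4_general x y h
end

section
/- If T is a compact self-adjoint operator on a complex Hilbert space ℋ ≠ 0, then ‖T + I‖ = ‖T‖ + 1 or ‖T - I‖ = ‖T‖ + 1; in particular T is parallel to the identity operator. -/
/-! A self-adjoint element `a` of a nontrivial C⋆-algebra has `‖a‖` or `-‖a‖` in its real
spectrum. Shifting by `±1` moves that spectral point to `±(‖a‖ + 1)` in the spectrum of `a ± 1`,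
and the spectrum is bounded by the norm, so the triangle inequality `‖a ± 1‖ ≤ ‖a‖ + 1` is an
equality. -/

theorem norm_add_algebraMap_eq_of_mem_spectrum {𝕜 A : Type*} [NormedField 𝕜] [NormedRing A]
    [NormedAlgebra 𝕜 A] [CompleteSpace A] [NormOneClass A] {a : A} {z c : 𝕜}
    (hz : z ∈ spectrum 𝕜 a) (h : ‖z + c‖ = ‖a‖ + ‖c‖) :
    ‖a + algebraMap 𝕜 A c‖ = ‖a‖ + ‖c‖ := by
  refine le_antisymm ((norm_add_le _ _).trans_eq (by rw [norm_algebraMap'])) ?_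
  have hmem : z + c ∈ spectrum 𝕜 (a + algebraMap 𝕜 A c) := by
    rw [add_comm a]
    exact spectrum.add_mem_add_iff.mpr hz
  exact h ▸ spectrum.norm_le_norm_of_mem hmem

theorem IsSelfAdjoint.norm_add_one_or_norm_sub_one {A : Type*} [CStarAlgebra A] [Nontrivial A]
    {a : A} (ha : IsSelfAdjoint a) : ‖a + 1‖ = ‖a‖ + 1 ∨ ‖a - 1‖ = ‖a‖ + 1 := by
  rcases CStarAlgebra.norm_or_neg_norm_mem_spectrum ha with hpos | hneg
  · left
    have := norm_add_algebraMap_eq_of_mem_spectrum (c := (1 : ℝ)) hpos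
      (by rw [norm_one, Real.norm_of_nonneg (by positivity)])
    simpa using this
  · right
    have := norm_add_algebraMap_eq_of_mem_spectrum (c := (-1 : ℝ)) hneg
      (by rw [norm_neg, norm_one, ← neg_add, norm_neg, Real.norm_of_nonneg (by positivity)])
    simpa [← sub_eq_add_neg] using this

theorem stmt_5_general {H : Type*} [NormedAddCommGroup H] [InnerProductSpace ℂ H]
    [CompleteSpace H] [Nontrivial H]
    (T : H →L[ℂ] H) (hsa : IsSelfAdjoint T) :
    ‖T + 1‖ = ‖T‖ + 1 ∨ ‖T - 1‖ = ‖T‖ + 1 :=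
  hsa.norm_add_one_or_norm_sub_one

theorem stmt_5 {H : Type*} [NormedAddCommGroup H] [InnerProductSpace ℂ H]
    [CompleteSpace H] [Nontrivial H]
    (T : H →L[ℂ] H) (hc : IsCompactOperator T) (hsa : IsSelfAdjoint T) :
    ‖T + 1‖ = ‖T‖ + 1 ∨ ‖T - 1‖ = ‖T‖ + 1 :=
  stmt_5_general T hsa
end

section
/- For T₁, T₂ ∈ B(ℋ): if T₁ ∥ T₂ then ‖T₁* T₂‖ = ‖T₁‖ · ‖T₂‖. -/
/-! The argument works in any C⋆-ring. By the C⋆-identity,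
`‖a + c b‖² = ‖a⋆a + b⋆b + c a⋆b + c̄ (a⋆b)⋆‖ ≤ ‖a‖² + ‖b‖² + 2‖a⋆b‖` when `|c| = 1`.
If `a ∥ b` the left side is `(‖a‖ + ‖b‖)²`, which forces `‖a⋆b‖ ≥ ‖a‖ ‖b‖`;
the reverse inequality is submultiplicativity. -/

section CStarRing

variable {𝕜 A : Type*} [RCLike 𝕜] [NonUnitalNormedRing A] [StarRing A] [CStarRing A]
  [NormedSpace 𝕜 A] [StarModule 𝕜 A] [IsScalarTower 𝕜 A A] [SMulCommClass 𝕜 A A]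

theorem CStarRing.norm_add_smul_sq_le {a b : A} {c : 𝕜} (hc : ‖c‖ = 1) :
    ‖a + c • b‖ ^ 2 ≤ ‖a‖ ^ 2 + ‖b‖ ^ 2 + 2 * ‖star a * b‖ := by
  have hcc : c * star c = 1 := by
    rw [RCLike.star_def, RCLike.mul_conj, hc]; norm_num
  have expand : star (a + c • b) * (a + c • b)
      = star a * a + star b * b + c • (star a * b) + star c • star (star a * b) := by
    simp only [star_add, star_smul, star_mul, star_star, add_mul, mul_add, mul_smul_comm,
      smul_mul_assoc, smul_add, smul_smul, hcc, one_smul]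
    abel
  calc ‖a + c • b‖ ^ 2 = ‖star (a + c • b) * (a + c • b)‖ := by
        rw [CStarRing.norm_star_mul_self, sq]
    _ ≤ ‖star a * a‖ + ‖star b * b‖ + ‖c • (star a * b)‖ + ‖star c • star (star a * b)‖ := by
        rw [expand]; exact norm_add₄_le
    _ = ‖a‖ ^ 2 + ‖b‖ ^ 2 + 2 * ‖star a * b‖ := by
        simp only [CStarRing.norm_star_mul_self, norm_smul, norm_star, hc, one_mul]; ring

theorem CStarRing.norm_star_mul_eq_of_norm_add_smul_eq {a b : A} {c : 𝕜} (hc : ‖c‖ = 1)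
    (hab : ‖a + c • b‖ = ‖a‖ + ‖b‖) : ‖star a * b‖ = ‖a‖ * ‖b‖ := by
  have hge : (‖a‖ + ‖b‖) ^ 2 ≤ ‖a‖ ^ 2 + ‖b‖ ^ 2 + 2 * ‖star a * b‖ :=
    hab ▸ norm_add_smul_sq_le hc
  have hle : ‖star a * b‖ ≤ ‖a‖ * ‖b‖ := norm_star a ▸ norm_mul_le (star a) b
  nlinarith

end CStarRing

theorem stmt_9 {H : Type*} [NormedAddCommGroup H] [InnerProductSpace ℂ H]
    [CompleteSpace H] (T₁ T₂ : H →L[ℂ] H)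
    (h : ∃ lam : ℂ, ‖lam‖ = 1 ∧ ‖T₁ + lam • T₂‖ = ‖T₁‖ + ‖T₂‖) :
    ‖ContinuousLinearMap.adjoint T₁ * T₂‖ = ‖T₁‖ * ‖T₂‖ := by
  obtain ⟨lam, hlam, hpar⟩ := h
  rw [← ContinuousLinearMap.star_eq_adjoint]
  exact CStarRing.norm_star_mul_eq_of_norm_add_smul_eq hlam hpar
end

section
/- For T₁, T₂ ∈ B(ℋ): if there exists a unimodular λ with ‖T₁*(T₁ + λT₂)‖ = ‖T₁‖(‖T₁‖ + ‖T₂‖), then T₁ ∥ T₂. -/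
section NormedStarRing

variable {𝕜 A : Type*} [NormedField 𝕜] [NormedRing A] [StarRing A] [NormedStarGroup A]
  [NormedSpace 𝕜 A]

theorem le_norm_of_norm_star_mul_eq {a c : A} {r : ℝ} (ha : a ≠ 0)
    (h : ‖star a * c‖ = ‖a‖ * r) : r ≤ ‖c‖ := by
  have hbound : ‖a‖ * r ≤ ‖a‖ * ‖c‖ := by
    simpa only [← h, norm_star] using norm_mul_le (star a) c
  exact le_of_mul_le_mul_left hbound (norm_pos_iff.mpr ha)

theorem norm_add_smul_eq_of_norm_star_mul_eq {a b : A} {lam : 𝕜} (hlam : ‖lam‖ = 1)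
    (h : ‖star a * (a + lam • b)‖ = ‖a‖ * (‖a‖ + ‖b‖)) :
    ‖a + lam • b‖ = ‖a‖ + ‖b‖ := by
  have hle : ‖a + lam • b‖ ≤ ‖a‖ + ‖b‖ := by
    simpa only [norm_smul, hlam, one_mul] using norm_add_le a (lam • b)
  rcases eq_or_ne a 0 with rfl | ha
  · simp only [zero_add, norm_zero, norm_smul, hlam, one_mul]
  · exact hle.antisymm (le_norm_of_norm_star_mul_eq ha h)

end NormedStarRing

theorem stmt_10 {H : Type*} [NormedAddCommGroup H] [InnerProductSpace ℂ H]
    [CompleteSpace H] (T₁ T₂ : H →L[ℂ] H)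
    (h : ∃ lam : ℂ, ‖lam‖ = 1 ∧
      ‖ContinuousLinearMap.adjoint T₁ * (T₁ + lam • T₂)‖ = ‖T₁‖ * (‖T₁‖ + ‖T₂‖)) :
    ∃ lam : ℂ, ‖lam‖ = 1 ∧ ‖T₁ + lam • T₂‖ = ‖T₁‖ + ‖T₂‖ := by
  obtain ⟨lam, hlam, heq⟩ := h
  rw [← ContinuousLinearMap.star_eq_adjoint] at heq
  exact ⟨lam, hlam, norm_add_smul_eq_of_norm_star_mul_eq hlam heq⟩
end

section
/- For ε ∈ [0,1) and T₁, T₂ ∈ B(ℋ): if T₁ is ε-parallel to T₂, then for every unit vector ξ ∈ ℋ, |⟨T₁ξ, T₂ξ⟩|² ≥ ‖T₁ξ‖²‖T₂ξ‖² − ε²‖T₁‖²‖T₂‖². -/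
/-!
The Gram quantity `‖a‖²‖b‖² - |⟪a, b⟫|²` does not change when `a` is replaced by `a + μ • b`,
and for the new vector it is at most `‖a + μ • b‖²‖b‖²`. Hence it is bounded by `‖b‖²` times the
squared distance from `a` to the line `ℂ b`. For `a = T₁ ξ`, `b = T₂ ξ` with `‖ξ‖ = 1`, that
distance is at most `⨅ μ, ‖T₁ + μ • T₂‖ ≤ ε‖T₁‖`, and `‖T₂ ξ‖ ≤ ‖T₂‖`.
-/

open scoped InnerProductSpace

section Gram

variable {𝕜 E : Type*} [RCLike 𝕜] [NormedAddCommGroup E] [InnerProductSpace 𝕜 E]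

theorem norm_sq_mul_norm_sq_sub_norm_inner_sq_add_smul (a b : E) (μ : 𝕜) :
    ‖a + μ • b‖ ^ 2 * ‖b‖ ^ 2 - ‖⟪a + μ • b, b⟫_𝕜‖ ^ 2 = ‖a‖ ^ 2 * ‖b‖ ^ 2 - ‖⟪a, b⟫_𝕜‖ ^ 2 := by
  apply RCLike.ofReal_injective (K := 𝕜)
  have hbb : (starRingEnd 𝕜) ⟪b, b⟫_𝕜 = ⟪b, b⟫_𝕜 := inner_self_conj b
  push_cast
  rw [← RCLike.mul_conj, ← RCLike.mul_conj]
  simp only [← inner_self_eq_norm_sq_to_K, inner_add_left, inner_add_right,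
    inner_smul_left, inner_smul_right, map_add, map_mul, RCLike.conj_conj, inner_conj_symm, hbb]
  ring

theorem norm_sq_mul_norm_sq_sub_norm_inner_sq_le (a b : E) (μ : 𝕜) :
    ‖a‖ ^ 2 * ‖b‖ ^ 2 - ‖⟪a, b⟫_𝕜‖ ^ 2 ≤ ‖b‖ ^ 2 * ‖a + μ • b‖ ^ 2 := by
  rw [← norm_sq_mul_norm_sq_sub_norm_inner_sq_add_smul a b μ]
  nlinarith [sq_nonneg ‖⟪a + μ • b, b⟫_𝕜‖]

theorem norm_sq_mul_norm_sq_sub_norm_inner_sq_le_iInf (a b : E) :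
    ‖a‖ ^ 2 * ‖b‖ ^ 2 - ‖⟪a, b⟫_𝕜‖ ^ 2 ≤ (‖b‖ * ⨅ μ : 𝕜, ‖a + μ • b‖) ^ 2 := by
  set g := ‖a‖ ^ 2 * ‖b‖ ^ 2 - ‖⟪a, b⟫_𝕜‖ ^ 2
  have hsqrt : √g ≤ ‖b‖ * ⨅ μ : 𝕜, ‖a + μ • b‖ := by
    rw [Real.mul_iInf_of_nonneg (norm_nonneg b)]
    refine le_ciInf fun μ => Real.sqrt_le_iff.mpr ⟨by positivity, ?_⟩
    rw [mul_pow]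
    exact norm_sq_mul_norm_sq_sub_norm_inner_sq_le a b μ
  calc g ≤ √g ^ 2 := Real.sq_sqrt' ▸ le_max_left g 0
    _ ≤ _ := pow_le_pow_left₀ (Real.sqrt_nonneg g) hsqrt 2

end Gram

theorem iInf_norm_apply_add_smul_le {𝕜 E : Type*} [RCLike 𝕜] [NormedAddCommGroup E]
    [NormedSpace 𝕜 E] (S T : E →L[𝕜] E) (x : E) :
    ⨅ μ : 𝕜, ‖S x + μ • T x‖ ≤ (⨅ μ : 𝕜, ‖S + μ • T‖) * ‖x‖ := by
  rw [Real.iInf_mul_of_nonneg (norm_nonneg x)]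
  exact ciInf_mono ⟨0, by rintro _ ⟨μ, rfl⟩; positivity⟩ fun μ => (S + μ • T).le_opNorm x

theorem stmt_11_general {H : Type*} [NormedAddCommGroup H] [InnerProductSpace ℂ H]
    (T₁ T₂ : H →L[ℂ] H) (ε : ℝ)
    (h : (⨅ μ : ℂ, ‖T₁ + μ • T₂‖) ≤ ε * ‖T₁‖) :
    ∀ ξ : H, ‖ξ‖ = 1 →
      ‖(inner ℂ (T₁ ξ) (T₂ ξ) : ℂ)‖ ^ 2 ≥
        ‖T₁ ξ‖ ^ 2 * ‖T₂ ξ‖ ^ 2 - ε ^ 2 * ‖T₁‖ ^ 2 * ‖T₂‖ ^ 2 := by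
  intro ξ hξ
  have hdist : ⨅ μ : ℂ, ‖T₁ ξ + μ • T₂ ξ‖ ≤ ε * ‖T₁‖ :=
    (iInf_norm_apply_add_smul_le T₁ T₂ ξ).trans (by rwa [hξ, mul_one])
  have hdist_nonneg : 0 ≤ ⨅ μ : ℂ, ‖T₁ ξ + μ • T₂ ξ‖ := Real.iInf_nonneg fun _ => norm_nonneg _
  have hT₂ : ‖T₂ ξ‖ ≤ ‖T₂‖ := by simpa [hξ] using T₂.le_opNorm ξ
  have hprod : ‖T₂ ξ‖ * ⨅ μ : ℂ, ‖T₁ ξ + μ • T₂ ξ‖ ≤ ‖T₂‖ * (ε * ‖T₁‖) :=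
    mul_le_mul hT₂ hdist hdist_nonneg (norm_nonneg _)
  have hgram := (norm_sq_mul_norm_sq_sub_norm_inner_sq_le_iInf (T₁ ξ) (T₂ ξ)).trans
    (pow_le_pow_left₀ (by positivity) hprod 2)
  linarith

theorem stmt_11 {H : Type*} [NormedAddCommGroup H] [InnerProductSpace ℂ H]
    [CompleteSpace H] (T₁ T₂ : H →L[ℂ] H) (ε : ℝ) (hε : 0 ≤ ε) (hε1 : ε < 1)
    (h : (⨅ μ : ℂ, ‖T₁ + μ • T₂‖) ≤ ε * ‖T₁‖) :
    ∀ ξ : H, ‖ξ‖ = 1 →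
      ‖(inner ℂ (T₁ ξ) (T₂ ξ) : ℂ)‖ ^ 2 ≥
        ‖T₁ ξ‖ ^ 2 * ‖T₂ ξ‖ ^ 2 - ε ^ 2 * ‖T₁‖ ^ 2 * ‖T₂‖ ^ 2 :=
  stmt_11_general T₁ T₂ ε h
end

section
/- For T ∈ B(ℋ): T ∥ I if and only if there exist a sequence of unit vectors (ξₙ) in ℋ and a unimodular λ such that ‖Tξₙ − λ‖T‖ξₙ‖ → 0. -/
/-!
With `x = T ξ`, `y = λ ξ` and `a = ‖T‖`, the weighted parallelogram identity
`‖x - a y‖² + a ‖x + y‖² = (1 + a) ‖x‖² + a (1 + a) ‖y‖²` gives, for unit `ξ`,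
`‖T ξ - λ ‖T‖ ξ‖² ≤ ‖T‖ ((‖T‖ + 1)² - ‖(T + λ) ξ‖²)`. Hence any norming sequence of unit vectors
for `T + λ I` with `‖T + λ I‖ = ‖T‖ + 1` is an approximate eigenvector sequence for `λ ‖T‖`.
Conversely, `(T + λ) ξ = (T ξ - λ ‖T‖ ξ) + λ (‖T‖ + 1) ξ`, so the triangle inequality
forces `‖T + λ I‖ ≥ ‖T‖ + 1`.
-/

open Filter Topology

section Normed

variable {𝕜 E F : Type*} [RCLike 𝕜] [NormedAddCommGroup E] [NormedSpace 𝕜 E]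
  [NormedAddCommGroup F] [NormedSpace 𝕜 F]

theorem add_one_sub_norm_sub_ofReal_smul_le {x y : E} {a : ℝ} (ha : 0 ≤ a) (hy : ‖y‖ = 1) :
    a + 1 - ‖x - (a : 𝕜) • y‖ ≤ ‖x + y‖ := by
  have h : ((a + 1 : ℝ) : 𝕜) • y = (x + y) - (x - (a : 𝕜) • y) := by
    rw [RCLike.ofReal_add, RCLike.ofReal_one, add_smul, one_smul]; abel
  have := norm_sub_le (x + y) (x - (a : 𝕜) • y)
  rw [← h, norm_smul, RCLike.norm_ofReal, hy, mul_one, abs_of_nonneg (by positivity)] at this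
  linarith

theorem ContinuousLinearMap.exists_seq_norm_eq_one_tendsto_opNorm [Nontrivial E]
    (f : E →L[𝕜] F) :
    ∃ ξ : ℕ → E, (∀ n, ‖ξ n‖ = 1) ∧ Tendsto (fun n => ‖f (ξ n)‖) atTop (𝓝 ‖f‖) := by
  let : NormedSpace ℝ E := NormedSpace.restrictScalars ℝ 𝕜 E
  have hne : ((fun x => ‖f x‖) '' Metric.sphere 0 1).Nonempty :=
    (NormedSpace.sphere_nonempty.mpr zero_le_one).image _
  have hbdd : BddAbove ((fun x => ‖f x‖) '' Metric.sphere 0 1) := by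
    refine ⟨‖f‖, ?_⟩
    rintro - ⟨x, hx, rfl⟩
    exact f.unit_le_opNorm x (mem_sphere_zero_iff_norm.1 hx).le
  obtain ⟨u, -, hu, hmem⟩ := exists_seq_tendsto_sSup hne hbdd
  choose ξ hξ hfξ using hmem
  refine ⟨ξ, fun n => mem_sphere_zero_iff_norm.1 (hξ n), ?_⟩
  rw [← f.sSup_sphere_eq_norm]
  simpa only [hfξ] using hu


theorem ContinuousLinearMap.norm_add_smul_one_eq_of_tendsto (T : E →L[𝕜] E) {lam : 𝕜}
    (hlam : ‖lam‖ = 1) {ξ : ℕ → E} (hξ : ∀ n, ‖ξ n‖ = 1)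
    (hT : Tendsto (fun n => ‖T (ξ n) - (lam * ‖T‖) • ξ n‖) atTop (𝓝 0)) :
    ‖T + lam • (1 : E →L[𝕜] E)‖ = ‖T‖ + 1 := by
  set S := T + lam • (1 : E →L[𝕜] E)
  have hle : ‖S‖ ≤ ‖T‖ + 1 :=
    calc ‖S‖ ≤ ‖T‖ + ‖lam‖ * ‖(1 : E →L[𝕜] E)‖ :=
        (norm_add_le _ _).trans (by gcongr; exact norm_smul_le lam (1 : E →L[𝕜] E))
      _ ≤ ‖T‖ + 1 := by rw [hlam, one_mul]; gcongr; exact norm_id_le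
  have hge : ∀ n, ‖T‖ + 1 - ‖T (ξ n) - (lam * ‖T‖) • ξ n‖ ≤ ‖S‖ := fun n => by
    have hy : ‖lam • ξ n‖ = 1 := by rw [norm_smul, hlam, hξ, one_mul]
    have key := add_one_sub_norm_sub_ofReal_smul_le (𝕜 := 𝕜) (x := T (ξ n)) (norm_nonneg T) hy
    rw [smul_smul, mul_comm] at key
    refine key.trans ?_
    simpa [S, hξ n] using S.le_opNorm (ξ n)
  have hlim : Tendsto (fun n => ‖T‖ + 1 - ‖T (ξ n) - (lam * ‖T‖) • ξ n‖) atTop (𝓝 (‖T‖ + 1)) := by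
    simpa using hT.const_sub (‖T‖ + 1)
  exact le_antisymm hle (le_of_tendsto' hlim hge)

end Normed

section InnerProduct

variable {𝕜 E : Type*} [RCLike 𝕜] [NormedAddCommGroup E] [InnerProductSpace 𝕜 E]

theorem norm_sub_ofReal_smul_sq_add_mul_norm_add_sq (x y : E) (a : ℝ) :
    ‖x - (a : 𝕜) • y‖ ^ 2 + a * ‖x + y‖ ^ 2 = (1 + a) * ‖x‖ ^ 2 + a * (1 + a) * ‖y‖ ^ 2 := by
  rw [norm_sub_sq (𝕜 := 𝕜), norm_add_sq (𝕜 := 𝕜), inner_smul_right, RCLike.re_ofReal_mul,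
    norm_smul, RCLike.norm_ofReal, mul_pow, sq_abs]
  ring

theorem norm_sub_ofReal_smul_sq_le {x y : E} {a : ℝ} (hx : ‖x‖ ≤ a) (hy : ‖y‖ = 1) :
    ‖x - (a : 𝕜) • y‖ ^ 2 ≤ a * ((a + 1) ^ 2 - ‖x + y‖ ^ 2) := by
  have ha : 0 ≤ a := (norm_nonneg x).trans hx
  have hx2 : ‖x‖ ^ 2 ≤ a ^ 2 := pow_le_pow_left₀ (norm_nonneg x) hx 2
  have := norm_sub_ofReal_smul_sq_add_mul_norm_add_sq (𝕜 := 𝕜) x y a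
  rw [hy] at this
  nlinarith

theorem ContinuousLinearMap.exists_tendsto_of_norm_add_smul_one_eq (T : E →L[𝕜] E) {lam : 𝕜}
    (hlam : ‖lam‖ = 1) (h : ‖T + lam • (1 : E →L[𝕜] E)‖ = ‖T‖ + 1) :
    ∃ ξ : ℕ → E, (∀ n, ‖ξ n‖ = 1) ∧
      Tendsto (fun n => ‖T (ξ n) - (lam * ‖T‖) • ξ n‖) atTop (𝓝 0) := by
  have : Nontrivial E := by
    by_contra hE
    rw [not_nontrivial_iff_subsingleton] at hE
    rw [ContinuousLinearMap.opNorm_subsingleton] at h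
    linarith [norm_nonneg T]
  obtain ⟨ξ, hξ, hS⟩ := (T + lam • (1 : E →L[𝕜] E)).exists_seq_norm_eq_one_tendsto_opNorm
  refine ⟨ξ, hξ, ?_⟩
  have hbound : ∀ n, ‖T (ξ n) - (lam * ‖T‖) • ξ n‖ ^ 2 ≤
      ‖T‖ * ((‖T‖ + 1) ^ 2 - ‖(T + lam • (1 : E →L[𝕜] E)) (ξ n)‖ ^ 2) := fun n => by
    have hx : ‖T (ξ n)‖ ≤ ‖T‖ := by simpa [hξ n] using T.le_opNorm (ξ n)
    have hy : ‖lam • ξ n‖ = 1 := by rw [norm_smul, hlam, hξ, one_mul]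
    have := norm_sub_ofReal_smul_sq_le (𝕜 := 𝕜) hx hy
    rwa [smul_smul, mul_comm] at this
  have hlim : Tendsto (fun n => ‖T‖ * ((‖T‖ + 1) ^ 2 -
      ‖(T + lam • (1 : E →L[𝕜] E)) (ξ n)‖ ^ 2)) atTop (𝓝 0) := by
    convert ((hS.pow 2).const_sub ((‖T‖ + 1) ^ 2)).const_mul ‖T‖ using 2
    rw [h, sub_self, mul_zero]
  have hsq := squeeze_zero (fun n => sq_nonneg _) hbound hlim
  simpa [Real.sqrt_sq (norm_nonneg _)] using hsq.sqrt

end InnerProduct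

theorem stmt_15_general {H : Type*} [NormedAddCommGroup H] [InnerProductSpace ℂ H]
    (T : H →L[ℂ] H) :
    (∃ lam : ℂ, ‖lam‖ = 1 ∧ ‖T + lam • (1 : H →L[ℂ] H)‖ = ‖T‖ + 1) ↔
    (∃ (ξ : ℕ → H) (lam : ℂ), (∀ n, ‖ξ n‖ = 1) ∧ ‖lam‖ = 1 ∧
      Filter.Tendsto (fun n => ‖T (ξ n) - (lam * ‖T‖) • ξ n‖)
        Filter.atTop (nhds 0)) := by
  constructor
  · rintro ⟨lam, hlam, h⟩
    obtain ⟨ξ, hξ, hT⟩ := T.exists_tendsto_of_norm_add_smul_one_eq hlam h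
    exact ⟨ξ, lam, hξ, hlam, hT⟩
  · rintro ⟨ξ, lam, hξ, hlam, hT⟩
    exact ⟨lam, hlam, T.norm_add_smul_one_eq_of_tendsto hlam hξ hT⟩

theorem stmt_15 {H : Type*} [NormedAddCommGroup H] [InnerProductSpace ℂ H]
    [CompleteSpace H] (T : H →L[ℂ] H) :
    (∃ lam : ℂ, ‖lam‖ = 1 ∧ ‖T + lam • (1 : H →L[ℂ] H)‖ = ‖T‖ + 1) ↔
    (∃ (ξ : ℕ → H) (lam : ℂ), (∀ n, ‖ξ n‖ = 1) ∧ ‖lam‖ = 1 ∧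
      Filter.Tendsto (fun n => ‖T (ξ n) - (lam * ‖T‖) • ξ n‖)
        Filter.atTop (nhds 0)) :=
  stmt_15_general T
end

section
/- For T ∈ B(ℋ): if T ∥ I then Tᵐ ∥ I for every natural number m ≥ 1, and moreover ‖Tᵐ‖ = ‖T‖ᵐ. -/
/-!
If `‖T + λ‖ = ‖T‖ + 1` with `|λ| = 1`, then unit vectors `x` nearly norming `T + λ` satisfy
`T x ≈ λ ‖T‖ x`: in an inner product space, `‖u - r v‖² ≤ r ((r + 1)² - ‖u + v‖²)` whenever
`‖u‖ ≤ r` and `‖v‖ = 1`. So `μ = λ ‖T‖` is an approximate eigenvalue of `T`, hence `μ ^ m` is one of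
`T ^ m` and `μ ^ m + λ ^ m = λ ^ m (‖T‖ ^ m + 1)` is one of `T ^ m + λ ^ m`. An approximate
eigenvalue is bounded by the operator norm, which gives both `‖T‖ ^ m ≤ ‖T ^ m‖` and
`‖T ^ m‖ + 1 ≤ ‖T ^ m + λ ^ m‖`; the reverse inequalities are submultiplicativity and the triangle
inequality.
-/

open ContinuousLinearMap Filter Topology

section NormedSpace

variable {𝕜 E : Type*} [NontriviallyNormedField 𝕜] [NormedAddCommGroup E] [NormedSpace 𝕜 E]

def IsApproxEigenvalue (T : E →L[𝕜] E) (μ : 𝕜) : Prop :=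
  ∀ ε > 0, ∃ x : E, ‖x‖ = 1 ∧ ‖T x - μ • x‖ < ε

namespace IsApproxEigenvalue

variable {T : E →L[𝕜] E} {μ : 𝕜}

theorem norm_le (h : IsApproxEigenvalue T μ) : ‖μ‖ ≤ ‖T‖ := by
  refine le_of_forall_pos_lt_add fun ε hε => ?_
  obtain ⟨x, hx, hTx⟩ := h ε hε
  calc ‖μ‖ = ‖T x - (T x - μ • x)‖ := by rw [sub_sub_cancel, norm_smul, hx, mul_one]
    _ ≤ ‖T x‖ + ‖T x - μ • x‖ := norm_sub_le _ _
    _ < ‖T‖ + ε := add_lt_add_of_le_of_lt (by simpa [hx] using T.le_opNorm x) hTx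

theorem add_smul_one (h : IsApproxEigenvalue T μ) (c : 𝕜) :
    IsApproxEigenvalue (T + c • 1) (μ + c) := by
  intro ε hε
  obtain ⟨x, hx, hTx⟩ := h ε hε
  refine ⟨x, hx, ?_⟩
  convert hTx using 2
  rw [add_apply, smul_apply, one_apply_eq_self, add_smul]
  abel

theorem pow (h : IsApproxEigenvalue T μ) (k : ℕ) : IsApproxEigenvalue (T ^ k) (μ ^ k) := by
  obtain ⟨P, hP⟩ : ∃ P : E →L[𝕜] E,
      T ^ k - algebraMap 𝕜 _ μ ^ k = P * (T - algebraMap 𝕜 _ μ) :=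
    ⟨_, ((Algebra.commute_algebraMap_right μ T).geom_sum₂_mul k).symm⟩
  have hP_apply (x : E) : (T ^ k) x - μ ^ k • x = P (T x - μ • x) := by
    simpa [← map_pow] using congr($hP x)
  intro ε hε
  obtain ⟨x, hx, hTx⟩ := h (ε / (‖P‖ + 1)) (by positivity)
  refine ⟨x, hx, ?_⟩
  calc ‖(T ^ k) x - μ ^ k • x‖ ≤ ‖P‖ * ‖T x - μ • x‖ := hP_apply x ▸ P.le_opNorm _
    _ ≤ (‖P‖ + 1) * ‖T x - μ • x‖ := by gcongr; linarith
    _ < (‖P‖ + 1) * (ε / (‖P‖ + 1)) := by gcongr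
    _ = ε := by field_simp

end IsApproxEigenvalue

end NormedSpace

theorem ContinuousLinearMap.exists_norm_eq_one_lt_apply_of_lt_opNorm {𝕜 E F : Type*} [RCLike 𝕜]
    [NormedAddCommGroup E] [NormedSpace 𝕜 E] [NormedAddCommGroup F] [NormedSpace 𝕜 F]
    (f : E →L[𝕜] F) {c : ℝ} (hc : 0 ≤ c) (hcf : c < ‖f‖) : ∃ x : E, ‖x‖ = 1 ∧ c < ‖f x‖ := by
  lift c to NNReal using hc
  obtain ⟨x, hx, hfx⟩ := f.exists_nnnorm_eq_one_lt_apply_of_lt_opNNNorm hcf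
  exact ⟨x, congr_arg NNReal.toReal hx, hfx⟩

section InnerProductSpace

variable {𝕜 E : Type*} [RCLike 𝕜] [NormedAddCommGroup E] [InnerProductSpace 𝕜 E]

theorem norm_sub_smul_sq_le {u v : E} {r : ℝ} (hr : 0 ≤ r) (hu : ‖u‖ ≤ r) (hv : ‖v‖ = 1) :
    ‖u - (r : 𝕜) • v‖ ^ 2 ≤ r * ((r + 1) ^ 2 - ‖u + v‖ ^ 2) := by
  have hre : RCLike.re (inner 𝕜 u ((r : 𝕜) • v)) = r * RCLike.re (inner 𝕜 u v) := by
    rw [inner_smul_right, RCLike.re_ofReal_mul]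
  have hrv : ‖(r : 𝕜) • v‖ = r := by rw [norm_smul, hv, mul_one, RCLike.norm_of_nonneg hr]
  rw [norm_sub_sq (𝕜 := 𝕜), norm_add_sq (𝕜 := 𝕜), hre, hrv, hv]
  nlinarith [mul_le_mul_of_nonneg_left (pow_le_pow_left₀ (norm_nonneg u) hu 2)
    (by linarith : 0 ≤ 1 + r)]

theorem isApproxEigenvalue_of_norm_add_smul_one {T : E →L[𝕜] E} {lam : 𝕜} (hlam : ‖lam‖ = 1)
    (hT : ‖T + lam • (1 : E →L[𝕜] E)‖ = ‖T‖ + 1) :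
    IsApproxEigenvalue T (lam * ‖T‖) := by
  set r := ‖T‖
  intro ε hε
  have hev : ∀ᶠ c in 𝓝[<] (r + 1), 0 ≤ c ∧ r * ((r + 1) ^ 2 - c ^ 2) < ε ^ 2 := by
    refine eventually_nhdsWithin_of_eventually_nhds (.and ?_ ?_)
    · exact eventually_ge_nhds (by positivity)
    · have : Tendsto (fun c : ℝ => r * ((r + 1) ^ 2 - c ^ 2)) (𝓝 (r + 1)) (𝓝 0) := by
        simpa using (by fun_prop : Continuous fun c : ℝ => r * ((r + 1) ^ 2 - c ^ 2)).tendsto (r + 1)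
      exact this.eventually (gt_mem_nhds (by positivity))
  obtain ⟨c, ⟨hc0, hc⟩, hc_lt⟩ := (hev.and self_mem_nhdsWithin).exists
  obtain ⟨x, hx, hAx⟩ := (T + lam • 1).exists_norm_eq_one_lt_apply_of_lt_opNorm hc0 (hT ▸ hc_lt)
  refine ⟨x, hx, lt_of_pow_lt_pow_left₀ 2 hε.le ?_⟩
  have hsmul : (lam * (r : 𝕜)) • x = (r : 𝕜) • lam • x := by rw [smul_smul, mul_comm]
  have hlx : ‖lam • x‖ = 1 := by rw [norm_smul, hlam, hx, one_mul]
  calc ‖T x - (lam * (r : 𝕜)) • x‖ ^ 2 ≤ r * ((r + 1) ^ 2 - ‖T x + lam • x‖ ^ 2) := by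
        rw [hsmul]
        exact norm_sub_smul_sq_le (norm_nonneg T) (by simpa [hx] using T.le_opNorm x) hlx
    _ ≤ r * ((r + 1) ^ 2 - c ^ 2) := by
        gcongr
        simpa using hAx.le
    _ < ε ^ 2 := hc

end InnerProductSpace

theorem stmt_16_general {H : Type*} [NormedAddCommGroup H] [InnerProductSpace ℂ H]
    (T : H →L[ℂ] H)
    (h : ∃ lam : ℂ, ‖lam‖ = 1 ∧ ‖T + lam • (1 : H →L[ℂ] H)‖ = ‖T‖ + 1)
    (m : ℕ) (hm : 1 ≤ m) :
    (∃ lam : ℂ, ‖lam‖ = 1 ∧ ‖T ^ m + lam • (1 : H →L[ℂ] H)‖ = ‖T ^ m‖ + 1) ∧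
      ‖T ^ m‖ = ‖T‖ ^ m := by
  obtain ⟨lam, hlam, hT⟩ := h
  have hpow := (isApproxEigenvalue_of_norm_add_smul_one hlam hT).pow m
  have hnorm : ‖T ^ m‖ = ‖T‖ ^ m := by
    refine le_antisymm (norm_pow_le' T hm) ?_
    simpa [norm_pow, hlam] using hpow.norm_le
  have hlam_pow : ‖lam ^ m‖ = 1 := by rw [norm_pow, hlam, one_pow]
  refine ⟨⟨lam ^ m, hlam_pow, le_antisymm ?_ ?_⟩, hnorm⟩
  · calc ‖T ^ m + lam ^ m • (1 : H →L[ℂ] H)‖ ≤ ‖T ^ m‖ + ‖lam ^ m • (1 : H →L[ℂ] H)‖ :=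
          norm_add_le _ _
      _ ≤ ‖T ^ m‖ + 1 := by
          rw [norm_smul, hlam_pow, one_mul]
          gcongr
          exact norm_id_le
  · have := (hpow.add_smul_one (lam ^ m)).norm_le
    rwa [mul_pow, ← mul_add_one, norm_mul, hlam_pow, one_mul, ← RCLike.ofReal_pow,
      ← RCLike.ofReal_one, ← RCLike.ofReal_add, RCLike.norm_of_nonneg (by positivity),
      ← hnorm] at this

theorem stmt_16 {H : Type*} [NormedAddCommGroup H] [InnerProductSpace ℂ H]
    [CompleteSpace H] (T : H →L[ℂ] H)
    (h : ∃ lam : ℂ, ‖lam‖ = 1 ∧ ‖T + lam • (1 : H →L[ℂ] H)‖ = ‖T‖ + 1)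
    (m : ℕ) (hm : 1 ≤ m) :
    (∃ lam : ℂ, ‖lam‖ = 1 ∧ ‖T ^ m + lam • (1 : H →L[ℂ] H)‖ = ‖T ^ m‖ + 1) ∧
      ‖T ^ m‖ = ‖T‖ ^ m :=
  stmt_16_general T h m hm
end

section
/- Let 𝒜 be a C*-algebra and a, b ∈ 𝒜. If there exist a state φ on 𝒜 and a unimodular λ with φ(a* b) = λ‖a‖‖b‖, then a ∥ b, i.e., ‖a + μb‖ = ‖a‖ + ‖b‖ for some unimodular μ. -/
/-!
The state gives a semi-inner product `⟪x, y⟫ = φ (x⋆ y)` on `𝒜` with `φ (x⋆ x) ≤ ‖x‖²`.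
Cauchy–Schwarz and `|φ (a⋆ b)| = ‖a‖ ‖b‖` force `φ (a⋆ a) = ‖a‖²` (when `b ≠ 0`), so that for
`μ = conj λ` we get `φ (a⋆ (a + μ b)) = ‖a‖ (‖a‖ + ‖b‖)`. Since `|φ (a⋆ c)| ≤ ‖a‖ ‖c‖`, this gives
`‖a + μ b‖ ≥ ‖a‖ + ‖b‖`, and the triangle inequality gives the reverse.
-/

open ComplexConjugate
open scoped ComplexOrder

section StarMulForm

variable {A F : Type*} [Ring A] [StarRing A] [Algebra ℂ A] [StarModule ℂ A]
  [FunLike F A ℂ] [LinearMapClass F ℂ A ℂ]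

theorem conj_apply_star_mul_of_im_eq_zero (φ : F)
    (hφ : ∀ x, (φ (star x * x)).im = 0) (x y : A) :
    conj (φ (star y * x)) = φ (star x * y) := by
  -- polarization: `φ (x⋆ y) + φ (y⋆ x)` is real and `φ (x⋆ y) - φ (y⋆ x)` is imaginary
  have hsum := hφ (x + y)
  have hdiff := hφ (x + Complex.I • y)
  simp only [star_add, star_smul, add_mul, mul_add, smul_mul_assoc, mul_smul_comm,
    map_add, map_smul, smul_eq_mul, Complex.star_def, Complex.conj_I, Complex.add_im,
    Complex.mul_im, Complex.mul_re, Complex.I_re, Complex.I_im, Complex.neg_re, Complex.neg_im,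
    hφ x, hφ y] at hsum hdiff
  apply Complex.ext <;> simp only [Complex.conj_re, Complex.conj_im] <;> linarith

theorem norm_apply_star_mul_sq_le (φ : F) (hφ : ∀ x, 0 ≤ φ (star x * x)) (x y : A) :
    ‖φ (star x * y)‖ ^ 2 ≤ (φ (star x * x)).re * (φ (star y * y)).re := by
  have hsymm := conj_apply_star_mul_of_im_eq_zero φ fun z ↦ (RCLike.nonneg_iff.mp (hφ z)).2
  let core : PreInnerProductSpace.Core ℂ A :=
    { inner x y := φ (star x * y)
      conj_inner_symm := hsymm
      re_inner_nonneg x := (RCLike.nonneg_iff.mp (hφ x)).1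
      add_left x y z := by rw [star_add, add_mul, map_add]
      smul_left x y r := by
        rw [star_smul, smul_mul_assoc, map_smul, smul_eq_mul, Complex.star_def] }
  have h : ‖φ (star x * y)‖ * ‖φ (star y * x)‖ ≤ (φ (star x * x)).re * (φ (star y * y)).re :=
    InnerProductSpace.Core.inner_mul_inner_self_le (𝕜 := ℂ) x y
  rwa [← hsymm y x, Complex.norm_conj, ← sq] at h

end StarMulForm

section Functional

variable {A : Type*} [NormedRing A] [StarRing A] [NormedStarGroup A] [NormedAlgebra ℂ A]
  {φ : A →L[ℂ] ℂ}

theorem norm_apply_star_mul_le (hφ1 : ‖φ‖ ≤ 1) (x y : A) :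
    ‖φ (star x * y)‖ ≤ ‖x‖ * ‖y‖ :=
  calc ‖φ (star x * y)‖ ≤ ‖φ‖ * ‖star x * y‖ := φ.le_opNorm _
    _ ≤ 1 * (‖star x‖ * ‖y‖) := by gcongr; exact norm_mul_le _ _
    _ = ‖x‖ * ‖y‖ := by rw [one_mul, norm_star]

theorem apply_star_mul_self_eq_norm_sq [StarModule ℂ A] (hφ : ∀ x, 0 ≤ φ (star x * x))
    (hφ1 : ‖φ‖ ≤ 1) {a b : A} (hb : b ≠ 0) (h : ‖φ (star a * b)‖ = ‖a‖ * ‖b‖) :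
    φ (star a * a) = ((‖a‖ ^ 2 : ℝ) : ℂ) := by
  have hre_le (x : A) : (φ (star x * x)).re ≤ ‖x‖ ^ 2 :=
    (Complex.re_le_norm _).trans ((norm_apply_star_mul_le hφ1 x x).trans_eq (sq _).symm)
  have hcs := norm_apply_star_mul_sq_le φ hφ a b
  have hb2 : 0 < ‖b‖ ^ 2 := by positivity
  have hge : ‖a‖ ^ 2 ≤ (φ (star a * a)).re := by
    rw [h, mul_pow] at hcs
    exact le_of_mul_le_mul_right (hcs.trans (mul_le_mul_of_nonneg_left (hre_le b)
      (RCLike.nonneg_iff.mp (hφ a)).1)) hb2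
  apply Complex.ext
  · exact le_antisymm (hre_le a) hge
  · exact (RCLike.nonneg_iff.mp (hφ a)).2

end Functional

theorem stmt_18 {A : Type*} [NormedRing A] [StarRing A] [CStarRing A]
    [NormedAlgebra ℂ A] [StarModule ℂ A] [PartialOrder A] [StarOrderedRing A]
    (a b : A) (φ : A →L[ℂ] ℂ) (hpos : ∀ x : A, 0 ≤ x → 0 ≤ (φ x).re ∧ (φ x).im = 0)
    (hnorm : ‖φ‖ = 1) (lam : ℂ) (hlam : ‖lam‖ = 1)
    (h : φ (star a * b) = lam * (‖a‖ * ‖b‖)) :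
    ∃ μ : ℂ, ‖μ‖ = 1 ∧ ‖a + μ • b‖ = ‖a‖ + ‖b‖ := by
  have hφ (x : A) : 0 ≤ φ (star x * x) := RCLike.nonneg_iff.mpr (hpos _ (star_mul_self_nonneg x))
  have hμ : ‖conj lam‖ = 1 := by rw [Complex.norm_conj, hlam]
  refine ⟨conj lam, hμ, le_antisymm ?_ ?_⟩
  · calc ‖a + conj lam • b‖ ≤ ‖a‖ + ‖conj lam • b‖ := norm_add_le _ _
      _ = ‖a‖ + ‖b‖ := by rw [norm_smul, hμ, one_mul]
  rcases eq_or_ne a 0 with rfl | ha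
  · simp [norm_smul, hlam]
  rcases eq_or_ne b 0 with rfl | hb
  · simp
  have hab : ‖φ (star a * b)‖ = ‖a‖ * ‖b‖ := by
    rw [h, norm_mul, hlam, one_mul, ← Complex.ofReal_mul, Complex.norm_real,
      Real.norm_of_nonneg (by positivity)]
  have haa := apply_star_mul_self_eq_norm_sq hφ hnorm.le hb hab
  have hkey : φ (star a * (a + conj lam • b)) = ((‖a‖ * (‖a‖ + ‖b‖) : ℝ) : ℂ) := by
    rw [mul_add, mul_smul_comm, map_add, map_smul, smul_eq_mul, h, haa, ← mul_assoc,
      Complex.conj_mul', hlam]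
    push_cast
    ring
  have hle := norm_apply_star_mul_le hnorm.le a (a + conj lam • b)
  rw [hkey, Complex.norm_real, Real.norm_of_nonneg (by positivity)] at hle
  exact le_of_mul_le_mul_left hle (norm_pos_iff.mpr ha)
end
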